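/- arXiv:2307.01357 — 2 statements merged into one kernel-verified Lean document; each statement's English description precedes it below -/
import Mathlib

section
/- Under the latent factor model and the linear span inclusion assumption, for every intervention a ∈ {0, …, A−1} there exists a slope vector θ(a) ∈ ℝ^{T₀} such that the average expected post-intervention outcome of every unit n under intervention a satisfies 𝔼[Ȳ_{n,post}^{(a)}] = (1/(T−T₀)) · ⟨θ(a), 𝔼[Y_{n,pre}]⟩. -/
open MeasureTheory ProbabilityTheory Matrix
open scoped ENNReal

noncomputable section

namespace APCR

/-- Squared ℓ₂ norm of a finite real vector. -/
def l2sq {k : ℕ} (v : Fin k → ℝ) : ℝ := ∑ i, v i ^ 2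

/-- ℓ₂ norm of a finite real vector. -/
def l2 {k : ℕ} (v : Fin k → ℝ) : ℝ := Real.sqrt (l2sq v)

/-- The ℓ₂→ℓ₂ operator norm of a real matrix. -/
def opNorm {m n : ℕ} (A : Matrix (Fin m) (Fin n) ℝ) : ℝ :=
  sSup {x : ℝ | ∃ v : Fin n → ℝ, l2sq v ≤ 1 ∧ x = l2 (A.mulVec v)}

/-- The Frobenius norm of a real matrix. -/
def frobNorm {m n : ℕ} (A : Matrix (Fin m) (Fin n) ℝ) : ℝ :=
  Real.sqrt (∑ i, ∑ j, A i j ^ 2)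

/-- `singularValue A i` is the `i`-th largest singular value of `A` (1-indexed), via
the Courant–Fischer max-min characterization. -/
def singularValue {m n : ℕ} (A : Matrix (Fin m) (Fin n) ℝ) (i : ℕ) : ℝ :=
  sSup {x : ℝ | ∃ V : Submodule ℝ (Fin n → ℝ), Module.finrank ℝ V = i ∧
    x = sInf {y : ℝ | ∃ v ∈ V, l2sq v = 1 ∧ y = l2 (A.mulVec v)}}

/-- `ℓ_δ(n) = 2 log log (2n) + log (d π² / (12 δ))`. -/
def elln (d : ℕ) (δ : ℝ) (n : ℕ) : ℝ :=
  2 * Real.log (Real.log (2 * (n : ℝ))) + Real.log (d * Real.pi ^ 2 / (12 * δ))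

/-- `U_n²` under the subGaussian covariate noise assumption (Assumption 1). -/
def U1sq (σg γ δ : ℝ) (d n : ℕ) : ℝ :=
  32 * σg ^ 2 * Real.exp 1 ^ 2 *
    (3 * Real.sqrt (n * elln d (δ / (2 * 17 ^ d)) n) + 5 * elln d (δ / (2 * 17 ^ d)) n) + n * γ

/-- `U_n²` under the bounded covariate noise assumption (Assumption 2). -/
def U2sq (Cb γ δ : ℝ) (d n : ℕ) : ℝ :=
  3 / 2 * Real.sqrt (n * Cb * d * γ * elln d δ n) + 7 / 3 * Cb * d * elln d δ n + n * γ

/-- The matrix stacking `f 1, …, f n` as rows. -/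
def rowMat {d : ℕ} (f : ℕ → Fin d → ℝ) (n : ℕ) : Matrix (Fin n) (Fin d) ℝ :=
  Matrix.of fun m j => f ((m : ℕ) + 1) j

/-- The matrix stacking `g 1, …, g n` as rows, with rows on which the action taken is
not `a` replaced by zero.  (Zero rows change neither the nonzero singular values, the
Gram matrix, nor any of the quantities entering PCR, so this faithfully implements the
restriction of the data matrix to the rounds on which action `a` was played.) -/
def maskMat {d A : ℕ} (g : ℕ → Fin d → ℝ) (act : ℕ → Fin A) (n : ℕ) (a : Fin A) :
    Matrix (Fin n) (Fin d) ℝ :=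
  Matrix.of fun m j => if act ((m : ℕ) + 1) = a then g ((m : ℕ) + 1) j else 0

/-- The vector `(y 1, …, y n)` with entries on which the action is not `a` zeroed out. -/
def maskVec {A : ℕ} (y : ℕ → ℝ) (act : ℕ → Fin A) (n : ℕ) (a : Fin A) : Fin n → ℝ :=
  fun m => if act ((m : ℕ) + 1) = a then y ((m : ℕ) + 1) else 0

/-- `c_n(a)`: the number of rounds `m ≤ n` on which action `a` was chosen. -/
def cnt {A : ℕ} (act : ℕ → Fin A) (n : ℕ) (a : Fin A) : ℕ :=
  ((Finset.Icc 1 n).filter fun m => act m = a).card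

/-- The regularized PCR estimate `θ̂ = V̂⁻¹ Ẑᵀ Y` where `Ẑ = Z P` and
`V̂ = Ẑᵀ Ẑ + ρ P`, the inverse being taken on the learned subspace (the projection `P`);
this is realized by inverting `V̂ + (1 - P)`, which acts as `V̂` on the learned subspace
and as the identity on its orthogonal complement. -/
def pcrEst {n d : ℕ} (ρ : ℝ) (Z : Matrix (Fin n) (Fin d) ℝ) (P : Matrix (Fin d) (Fin d) ℝ)
    (Y : Fin n → ℝ) : Fin d → ℝ :=
  ((Z * P)ᵀ * (Z * P) + ρ • P + (1 - P))⁻¹.mulVec ((Z * P)ᵀ.mulVec Y)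

/-- The (oracle) ridge estimate computed from the covariates projected by `P`:
`θ̌ = (ŽᵀŽ + ρ I)⁻¹ Žᵀ Y` with `Ž = Z P`. -/
def ridgeEst {n d : ℕ} (ρ : ℝ) (Z : Matrix (Fin n) (Fin d) ℝ) (P : Matrix (Fin d) (Fin d) ℝ)
    (Y : Fin n → ℝ) : Fin d → ℝ :=
  ((Z * P)ᵀ * (Z * P) + ρ • (1 : Matrix (Fin d) (Fin d) ℝ))⁻¹.mulVec ((Z * P)ᵀ.mulVec Y)

variable {Ω : Type*} [MeasureSpace Ω]

/-- `X` is an `s`-subGaussian real random variable (with integrability of the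
exponential moments, so that the mgf bound is meaningful). -/
def SubGaussianRV (X : Ω → ℝ) (s : ℝ) : Prop :=
  Measurable X ∧ ∀ l : ℝ,
    Integrable (fun ω => Real.exp (l * X ω)) ∧
      (∫ ω, Real.exp (l * X ω)) ≤ Real.exp (l ^ 2 * s ^ 2 / 2)

/-- `X` is an `(s, c)`-subGamma real random variable. -/
def SubGammaRV (X : Ω → ℝ) (s c : ℝ) : Prop :=
  Measurable X ∧ ∀ l : ℝ, |l| < 1 / c →
    Integrable (fun ω => Real.exp (l * X ω)) ∧
      (∫ ω, Real.exp (l * X ω)) ≤ Real.exp (s ^ 2 * (l ^ 2 / (2 * (1 - c * l))))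

/-- A random vector is `s`-subGaussian when every unit projection of it is. -/
def SubGaussianVec {d : ℕ} (ε : Ω → Fin d → ℝ) (s : ℝ) : Prop :=
  Measurable ε ∧ ∀ v : Fin d → ℝ, l2sq v = 1 →
    SubGaussianRV (fun ω => ∑ i, v i * ε ω i) s

/-- The second-moment matrix `𝔼[ε εᵀ]` of a random vector. -/
def covMat {d : ℕ} (ε : Ω → Fin d → ℝ) : Matrix (Fin d) (Fin d) ℝ :=
  Matrix.of fun i j => ∫ ω, ε ω i * ε ω j

/-- `P` is the orthogonal projection onto the span of the top `r` right singular vectors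
of `Z`: a symmetric idempotent of rank at most `r` such that `Z P` is a best possible
approximation of `Z` in Frobenius norm among all such projections (Eckart–Young). -/
def IsTopRProj {m d : ℕ} (r : ℕ) (Z : Matrix (Fin m) (Fin d) ℝ)
    (P : Matrix (Fin d) (Fin d) ℝ) : Prop :=
  Pᵀ = P ∧ P * P = P ∧ P.rank ≤ r ∧
    ∀ Q : Matrix (Fin d) (Fin d) ℝ, Qᵀ = Q → Q * Q = Q → Q.rank ≤ r →
      frobNorm (Z - Z * P) ≤ frobNorm (Z - Z * Q)


/-- **Reformulation of the average expected post-intervention outcome.**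
Under the latent factor model `Y_{n,t}^{(a)} = ⟨U_t^{(a)}, V_n⟩ + ε_{n,t}^{(a)}`
(Assumption 4) and the linear span inclusion assumption (Assumption 5), for every
intervention `a` there exists a slope vector `θ(a) ∈ ℝ^{T₀}` such that for every unit
`n`, `𝔼[Ȳ_{n,post}^{(a)}] = (1/(T - T₀)) ⟨θ(a), 𝔼[Y_{n,pre}]⟩`. -/
theorem stmt3 {Ω : Type*} [MeasureSpace Ω] [IsProbabilityMeasure (volume : Measure Ω)]
    (T T₀ r A : ℕ) [NeZero A] (hT : T₀ < T) (σg : ℝ) (hσ : 0 ≤ σg)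
    -- latent factors
    (U : Fin T → Fin A → Fin r → ℝ) (V : ℕ → Fin r → ℝ)
    -- idiosyncratic noise
    (eps : ℕ → Fin T → Fin A → Ω → ℝ)
    -- potential outcomes
    (Ypot : ℕ → Fin T → Fin A → Ω → ℝ)
    (hYpot : ∀ n t a ω, Ypot n t a ω = (∑ i, U t a i * V n i) + eps n t a ω)
    -- Assumption 4: zero-mean subGaussian noise, bounded mean outcomes
    (hmean : ∀ n t a, Integrable (eps n t a) ∧ (∫ ω, eps n t a ω) = 0)
    (hsg : ∀ n t a, SubGaussianRV (eps n t a) σg)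
    (hbdd : ∀ n t a, |∑ i, U t a i * V n i| ≤ 1)
    -- Assumption 5: linear span inclusion
    (hspan : ∀ t : Fin T, T₀ ≤ (t : ℕ) → ∀ a : Fin A,
      U t a ∈ Submodule.span ℝ {u : Fin r → ℝ | ∃ s : Fin T, (s : ℕ) < T₀ ∧ u = U s 0}) :
    ∀ a : Fin A, ∃ θ : Fin T₀ → ℝ, ∀ n : ℕ,
      (1 / (T - T₀ : ℝ)) *
          ∑ t ∈ Finset.univ.filter (fun t : Fin T => T₀ ≤ (t : ℕ)), ∫ ω, Ypot n t a ω
        = (1 / (T - T₀ : ℝ)) *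
            ∑ s : Fin T₀, θ s * ∫ ω, Ypot n (Fin.castLE hT.le s) 0 ω := by
  intro a
  -- the spanning set is the range of the pre-treatment factors
  have hset : {u : Fin r → ℝ | ∃ s : Fin T, (s : ℕ) < T₀ ∧ u = U s 0}
      = Set.range (fun s : Fin T₀ => U (Fin.castLE hT.le s) 0) := by
    ext u
    constructor
    · rintro ⟨s, hs, rfl⟩
      exact ⟨⟨(s : ℕ), hs⟩, rfl⟩
    · rintro ⟨s, rfl⟩
      exact ⟨Fin.castLE hT.le s, s.isLt, rfl⟩
  -- the summed post-intervention factor lies in the span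
  have hw : (∑ t ∈ Finset.univ.filter (fun t : Fin T => T₀ ≤ (t : ℕ)), U t a)
      ∈ Submodule.span ℝ (Set.range (fun s : Fin T₀ => U (Fin.castLE hT.le s) 0)) := by
    apply Submodule.sum_mem
    intro t ht
    rw [← hset]
    exact hspan t (Finset.mem_filter.mp ht).2 a
  rw [Submodule.mem_span_range_iff_exists_fun ℝ] at hw
  obtain ⟨θ, hθ⟩ := hw
  refine ⟨θ, fun n => ?_⟩
  -- expected outcomes are the factor inner products
  have hint : ∀ t (b : Fin A), (∫ ω, Ypot n t b ω) = ∑ i, U t b i * V n i := by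
    intro t b
    have h1 := (hmean n t b).1
    have h2 := (hmean n t b).2
    calc (∫ ω, Ypot n t b ω)
        = ∫ ω, ((∑ i, U t b i * V n i) + eps n t b ω) := by
          apply integral_congr_ae
          filter_upwards with ω using hYpot n t b ω
      _ = (∫ _ω : Ω, (∑ i, U t b i * V n i)) + ∫ ω, eps n t b ω :=
          integral_add (integrable_const _) h1
      _ = ∑ i, U t b i * V n i := by
          rw [h2, integral_const]; simp
  congr 1
  calc (∑ t ∈ Finset.univ.filter (fun t : Fin T => T₀ ≤ (t : ℕ)), ∫ ω, Ypot n t a ω)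
      = ∑ t ∈ Finset.univ.filter (fun t : Fin T => T₀ ≤ (t : ℕ)), ∑ i, U t a i * V n i := by
        exact Finset.sum_congr rfl fun t _ => hint t a
    _ = ∑ i, (∑ t ∈ Finset.univ.filter (fun t : Fin T => T₀ ≤ (t : ℕ)), U t a) i * V n i := by
        rw [Finset.sum_comm]
        refine Finset.sum_congr rfl fun i _ => ?_
        simp [Finset.sum_apply, Finset.sum_mul]
    _ = ∑ i, (∑ s : Fin T₀, θ s • U (Fin.castLE hT.le s) 0) i * V n i := by rw [hθ]
    _ = ∑ s : Fin T₀, θ s * ∑ i, U (Fin.castLE hT.le s) 0 i * V n i := by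
        simp only [Finset.sum_apply, Pi.smul_apply, smul_eq_mul, Finset.sum_mul,
          Finset.mul_sum, mul_assoc]
        exact Finset.sum_comm
    _ = ∑ s : Fin T₀, θ s * ∫ ω, Ypot n (Fin.castLE hT.le s) 0 ω := by
        exact Finset.sum_congr rfl fun s _ => by rw [hint]

end APCR
end
end

section
/- In the adaptive error-in-variables setting, for all n ≥ 1 and a ∈ [A] the following deterministic inequality holds: ‖𝐗_n(a)θ(a) − Ẑ_n(a)θ(a)‖₂² ≤ 2L²σ₁(𝐙_n(a))²·‖𝐏 − P̂_n(a)‖_op² + 2L²‖ℰ_n‖_op², where 𝐏 is the projection onto the true subspace W* and P̂_n(a) is the projection onto the top r right singular vectors of 𝐙_n(a). -/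
open MeasureTheory ProbabilityTheory Matrix
open scoped ENNReal

noncomputable section

namespace APCR

variable {Ω : Type*} [MeasureSpace Ω]

section Aux

lemma l2sq_nonneg {k : ℕ} (v : Fin k → ℝ) : 0 ≤ l2sq v :=
  Finset.sum_nonneg fun _ _ => sq_nonneg _

lemma l2_nonneg {k : ℕ} (v : Fin k → ℝ) : 0 ≤ l2 v := Real.sqrt_nonneg _

lemma l2_sq {k : ℕ} (v : Fin k → ℝ) : l2 v ^ 2 = l2sq v := Real.sq_sqrt (l2sq_nonneg v)

lemma l2sq_smul {k : ℕ} (c : ℝ) (v : Fin k → ℝ) : l2sq (c • v) = c ^ 2 * l2sq v := by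
  simp [l2sq, Finset.mul_sum, mul_pow]

lemma l2_smul {k : ℕ} (c : ℝ) (v : Fin k → ℝ) : l2 (c • v) = |c| * l2 v := by
  rw [l2, l2, l2sq_smul, Real.sqrt_mul (sq_nonneg c), Real.sqrt_sq_eq_abs]

lemma l2sq_eq_zero {k : ℕ} {v : Fin k → ℝ} (h : l2sq v = 0) : v = 0 := by
  funext i
  have h1 := (Finset.sum_eq_zero_iff_of_nonneg (fun i _ => sq_nonneg (v i))).1 h i
    (Finset.mem_univ i)
  have : v i = 0 := by nlinarith [sq_nonneg (v i)]
  simpa using this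

lemma l2_pos {k : ℕ} {v : Fin k → ℝ} (hv : v ≠ 0) : 0 < l2 v := by
  have : 0 < l2sq v :=
    lt_of_le_of_ne (l2sq_nonneg v) fun h => hv (l2sq_eq_zero h.symm)
  exact Real.sqrt_pos.2 this

lemma frobNorm_nonneg {m n : ℕ} (A : Matrix (Fin m) (Fin n) ℝ) : 0 ≤ frobNorm A :=
  Real.sqrt_nonneg _

lemma l2sq_mulVec_le_frob {m n : ℕ} (A : Matrix (Fin m) (Fin n) ℝ) (v : Fin n → ℝ) :
    l2sq (A.mulVec v) ≤ frobNorm A ^ 2 * l2sq v := by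
  have hfrob : frobNorm A ^ 2 = ∑ i, ∑ j, A i j ^ 2 :=
    Real.sq_sqrt (Finset.sum_nonneg fun i _ => Finset.sum_nonneg fun j _ => sq_nonneg _)
  calc l2sq (A.mulVec v) = ∑ i, (∑ j, A i j * v j) ^ 2 := by
        simp [l2sq, Matrix.mulVec, dotProduct]
    _ ≤ ∑ i : Fin m, (∑ j, A i j ^ 2) * (∑ j, v j ^ 2) :=
        Finset.sum_le_sum fun i _ => Finset.sum_mul_sq_le_sq_mul_sq _ _ _
    _ = (∑ i, ∑ j, A i j ^ 2) * l2sq v := by rw [l2sq, ← Finset.sum_mul]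
    _ = frobNorm A ^ 2 * l2sq v := by rw [hfrob]

lemma l2_mulVec_le_frob {m n : ℕ} (A : Matrix (Fin m) (Fin n) ℝ) (v : Fin n → ℝ) :
    l2 (A.mulVec v) ≤ frobNorm A * l2 v := by
  rw [l2, l2]
  calc Real.sqrt (l2sq (A.mulVec v)) ≤ Real.sqrt (frobNorm A ^ 2 * l2sq v) :=
        Real.sqrt_le_sqrt (l2sq_mulVec_le_frob A v)
    _ = frobNorm A * Real.sqrt (l2sq v) := by
        rw [Real.sqrt_mul (sq_nonneg _), Real.sqrt_sq (frobNorm_nonneg A)]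

lemma opNorm_bddAbove {m n : ℕ} (A : Matrix (Fin m) (Fin n) ℝ) :
    BddAbove {x : ℝ | ∃ v : Fin n → ℝ, l2sq v ≤ 1 ∧ x = l2 (A.mulVec v)} := by
  refine ⟨frobNorm A, ?_⟩
  rintro x ⟨v, hv, rfl⟩
  have h1 : l2 v ≤ 1 := by
    rw [l2]
    exact (Real.sqrt_le_sqrt hv).trans_eq Real.sqrt_one
  calc l2 (A.mulVec v) ≤ frobNorm A * l2 v := l2_mulVec_le_frob A v
    _ ≤ frobNorm A * 1 := mul_le_mul_of_nonneg_left h1 (frobNorm_nonneg A)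
    _ = frobNorm A := mul_one _

lemma le_opNorm {m n : ℕ} (A : Matrix (Fin m) (Fin n) ℝ) {v : Fin n → ℝ}
    (hv : l2sq v ≤ 1) : l2 (A.mulVec v) ≤ opNorm A :=
  le_csSup (opNorm_bddAbove A) ⟨v, hv, rfl⟩

lemma opNorm_nonneg {m n : ℕ} (A : Matrix (Fin m) (Fin n) ℝ) : 0 ≤ opNorm A := by
  have h0 : l2 (A.mulVec 0) ≤ opNorm A := le_opNorm A (by simp [l2sq])
  simpa [Matrix.mulVec_zero, l2, l2sq] using h0

lemma l2_mulVec_le_opNorm {m n : ℕ} (A : Matrix (Fin m) (Fin n) ℝ) (v : Fin n → ℝ) :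
    l2 (A.mulVec v) ≤ opNorm A * l2 v := by
  by_cases hv : v = 0
  · subst hv; simp [Matrix.mulVec_zero, l2, l2sq]
  · have hvpos : 0 < l2 v := l2_pos hv
    have hu : l2sq ((l2 v)⁻¹ • v) = 1 := by
      rw [l2sq_smul, inv_pow, l2_sq]
      exact inv_mul_cancel₀ (by rw [← l2_sq]; positivity)
    have key : l2 (A.mulVec ((l2 v)⁻¹ • v)) ≤ opNorm A := le_opNorm A hu.le
    rw [Matrix.mulVec_smul, l2_smul, abs_inv, abs_of_nonneg (l2_nonneg v)] at key
    have := mul_le_mul_of_nonneg_left key hvpos.le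
    rwa [← mul_assoc, mul_inv_cancel₀ hvpos.ne', one_mul, mul_comm] at this

lemma sv1_nonneg {m n : ℕ} (A : Matrix (Fin m) (Fin n) ℝ) : 0 ≤ singularValue A 1 := by
  apply Real.sSup_nonneg
  rintro x ⟨V, hV, rfl⟩
  apply Real.sInf_nonneg
  rintro y ⟨v, _, _, rfl⟩
  exact l2_nonneg _

lemma sv1_bddAbove {m n : ℕ} (A : Matrix (Fin m) (Fin n) ℝ) :
    BddAbove {x : ℝ | ∃ V : Submodule ℝ (Fin n → ℝ), Module.finrank ℝ V = 1 ∧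
      x = sInf {y : ℝ | ∃ v ∈ V, l2sq v = 1 ∧ y = l2 (A.mulVec v)}} := by
  refine ⟨frobNorm A, ?_⟩
  rintro x ⟨V, hV, rfl⟩
  obtain ⟨v, hvV, hv0⟩ : ∃ v ∈ V, v ≠ 0 := by
    rcases (Submodule.ne_bot_iff V).1 (fun h => by rw [h] at hV; simp at hV) with ⟨v, hvV, hv0⟩
    exact ⟨v, hvV, hv0⟩
  have hvpos : 0 < l2 v := l2_pos hv0
  have huV : (l2 v)⁻¹ • v ∈ V := Submodule.smul_mem V _ hvV
  have hu : l2sq ((l2 v)⁻¹ • v) = 1 := by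
    rw [l2sq_smul, inv_pow, l2_sq]
    exact inv_mul_cancel₀ (by rw [← l2_sq]; positivity)
  have hbdd : BddBelow {y : ℝ | ∃ v ∈ V, l2sq v = 1 ∧ y = l2 (A.mulVec v)} := by
    refine ⟨0, ?_⟩; rintro y ⟨w, _, _, rfl⟩; exact l2_nonneg _
  refine csInf_le_of_le hbdd ⟨(l2 v)⁻¹ • v, huV, hu, rfl⟩ ?_
  calc l2 (A.mulVec ((l2 v)⁻¹ • v)) ≤ frobNorm A * l2 ((l2 v)⁻¹ • v) := l2_mulVec_le_frob _ _
    _ = frobNorm A := by rw [l2, hu, Real.sqrt_one, mul_one]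

lemma l2_mulVec_le_sv1 {m n : ℕ} (A : Matrix (Fin m) (Fin n) ℝ) (w : Fin n → ℝ) :
    l2 (A.mulVec w) ≤ singularValue A 1 * l2 w := by
  by_cases hw : w = 0
  · subst hw; simp [Matrix.mulVec_zero, l2, l2sq]
  · have hwpos : 0 < l2 w := l2_pos hw
    set S := {y : ℝ | ∃ v ∈ Submodule.span ℝ {w}, l2sq v = 1 ∧ y = l2 (A.mulVec v)} with hS
    have hmem : (l2 w)⁻¹ * l2 (A.mulVec w) ∈ S := by
      refine ⟨(l2 w)⁻¹ • w,
        Submodule.smul_mem _ _ (Submodule.mem_span_singleton_self w), ?_, ?_⟩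
      · rw [l2sq_smul, inv_pow, l2_sq]
        exact inv_mul_cancel₀ (by rw [← l2_sq]; positivity)
      · rw [Matrix.mulVec_smul, l2_smul, abs_inv, abs_of_nonneg (l2_nonneg w)]
    have hlow : ∀ y ∈ S, (l2 w)⁻¹ * l2 (A.mulVec w) ≤ y := by
      rintro y ⟨v, hvV, hv1, rfl⟩
      obtain ⟨c, rfl⟩ := Submodule.mem_span_singleton.1 hvV
      rw [l2sq_smul] at hv1
      have habs : |c| = (l2 w)⁻¹ := by
        have h2 : (|c| * l2 w) ^ 2 = 1 := by rw [mul_pow, sq_abs, l2_sq]; exact hv1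
        have hx0 : 0 ≤ |c| * l2 w := mul_nonneg (abs_nonneg c) (l2_nonneg w)
        have hfac : (|c| * l2 w - 1) * (|c| * l2 w + 1) = 0 := by nlinarith
        have h3 : |c| * l2 w = 1 := by
          rcases mul_eq_zero.1 hfac with h | h
          · linarith
          · linarith
        field_simp
        linarith [h3]
      rw [Matrix.mulVec_smul, l2_smul, habs]
    have hSinf : (l2 w)⁻¹ * l2 (A.mulVec w) ≤ sInf S := le_csInf ⟨_, hmem⟩ hlow
    have hsv : sInf S ≤ singularValue A 1 :=
      le_csSup (sv1_bddAbove A) ⟨Submodule.span ℝ {w}, finrank_span_singleton hw, rfl⟩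
    have := hSinf.trans hsv
    have h4 := mul_le_mul_of_nonneg_left this hwpos.le
    rwa [← mul_assoc, mul_inv_cancel₀ hwpos.ne', one_mul, mul_comm (l2 w)] at h4

lemma l2sq_sub_le {k : ℕ} (a b : Fin k → ℝ) :
    l2sq (a - b) ≤ 2 * l2sq a + 2 * l2sq b := by
  simp only [l2sq, Finset.mul_sum, ← Finset.sum_add_distrib]
  refine Finset.sum_le_sum fun i _ => ?_
  simp only [Pi.sub_apply]
  nlinarith [sq_nonneg (a i + b i)]

end Aux

/-- **Deterministic bound on the projection bias term, Lemma T2.**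
With `𝐙_n(a) = 𝐗_n(a) + ℰ_n(a)` (the rows of `ℰ_n(a)` being a sub-selection of the rows
of the full noise matrix `ℰ_n`), rows of `𝐗_n(a)` in `W*`, `‖θ‖₂ ≤ L`, and
`Ẑ_n(a) = 𝐙_n(a) P̂_n(a)`:
`‖𝐗_n(a) θ - Ẑ_n(a) θ‖₂² ≤ 2 L² σ₁(𝐙_n(a))² ‖𝐏 - P̂_n(a)‖_op² + 2 L² ‖ℰ_n‖_op²`. -/
theorem stmt17 (c nn d r : ℕ) (L : ℝ) (hL : 0 ≤ L)
    (Pproj : Matrix (Fin d) (Fin d) ℝ)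
    (hPsym : Pprojᵀ = Pproj) (hPidem : Pproj * Pproj = Pproj) (hPrank : Pproj.rank = r)
    (X E : Matrix (Fin c) (Fin d) ℝ) (Efull : Matrix (Fin nn) (Fin d) ℝ)
    (f : Fin c → Fin nn) (hf : Function.Injective f) (hE : E = Efull.submatrix f id)
    (hXW : X * Pproj = X)
    (θ : Fin d → ℝ) (hθW : Pproj.mulVec θ = θ) (hθL : l2 θ ≤ L)
    (Phat : Matrix (Fin d) (Fin d) ℝ) (hPhat : IsTopRProj r (X + E) Phat) :
    l2sq (X.mulVec θ - ((X + E) * Phat).mulVec θ) ≤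
      2 * L ^ 2 * singularValue (X + E) 1 ^ 2 * opNorm (Pproj - Phat) ^ 2
        + 2 * L ^ 2 * opNorm Efull ^ 2 := by
  have hid : X.mulVec θ - ((X + E) * Phat).mulVec θ
      = (X + E).mulVec ((Pproj - Phat).mulVec θ) - E.mulVec θ := by
    rw [Matrix.sub_mulVec, hθW, Matrix.mulVec_sub, Matrix.add_mulVec, Matrix.mulVec_mulVec]
    abel
  rw [hid]
  have hθsq : l2 θ ^ 2 ≤ L ^ 2 := pow_le_pow_left₀ (l2_nonneg θ) hθL 2
  -- Term 1
  set w := (Pproj - Phat).mulVec θ with hw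
  have b1 : l2 ((X + E).mulVec w) ≤
      singularValue (X + E) 1 * (opNorm (Pproj - Phat) * L) := by
    calc l2 ((X + E).mulVec w) ≤ singularValue (X + E) 1 * l2 w := l2_mulVec_le_sv1 _ _
      _ ≤ singularValue (X + E) 1 * (opNorm (Pproj - Phat) * L) := by
          refine mul_le_mul_of_nonneg_left ?_ (sv1_nonneg _)
          calc l2 w ≤ opNorm (Pproj - Phat) * l2 θ := l2_mulVec_le_opNorm _ _
            _ ≤ opNorm (Pproj - Phat) * L :=
                mul_le_mul_of_nonneg_left hθL (opNorm_nonneg _)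
  have h1 : l2sq ((X + E).mulVec w) ≤
      singularValue (X + E) 1 ^ 2 * opNorm (Pproj - Phat) ^ 2 * L ^ 2 := by
    have := pow_le_pow_left₀ (l2_nonneg _) b1 2
    rw [l2_sq] at this
    calc l2sq ((X + E).mulVec w) ≤
        (singularValue (X + E) 1 * (opNorm (Pproj - Phat) * L)) ^ 2 := this
      _ = singularValue (X + E) 1 ^ 2 * opNorm (Pproj - Phat) ^ 2 * L ^ 2 := by ring
  -- Term 2
  have h2a : l2sq (E.mulVec θ) ≤ l2sq (Efull.mulVec θ) := by
    subst hE
    have heq : l2sq ((Efull.submatrix f id).mulVec θ)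
        = ∑ i : Fin c, (Efull.mulVec θ (f i)) ^ 2 := rfl
    rw [heq]
    calc ∑ i : Fin c, (Efull.mulVec θ (f i)) ^ 2
        = ∑ j ∈ Finset.univ.image f, (Efull.mulVec θ j) ^ 2 := by
          rw [Finset.sum_image fun a _ b _ h => hf h]
      _ ≤ ∑ j : Fin nn, (Efull.mulVec θ j) ^ 2 :=
          Finset.sum_le_sum_of_subset_of_nonneg (Finset.subset_univ _)
            fun j _ _ => sq_nonneg _
      _ = l2sq (Efull.mulVec θ) := rfl
  have h2 : l2sq (E.mulVec θ) ≤ opNorm Efull ^ 2 * L ^ 2 := by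
    refine h2a.trans ?_
    have b2 : l2 (Efull.mulVec θ) ≤ opNorm Efull * L :=
      (l2_mulVec_le_opNorm _ _).trans (mul_le_mul_of_nonneg_left hθL (opNorm_nonneg _))
    have := pow_le_pow_left₀ (l2_nonneg _) b2 2
    rw [l2_sq] at this
    calc l2sq (Efull.mulVec θ) ≤ (opNorm Efull * L) ^ 2 := this
      _ = opNorm Efull ^ 2 * L ^ 2 := by ring
  calc l2sq ((X + E).mulVec w - E.mulVec θ)
      ≤ 2 * l2sq ((X + E).mulVec w) + 2 * l2sq (E.mulVec θ) := l2sq_sub_le _ _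
    _ ≤ 2 * (singularValue (X + E) 1 ^ 2 * opNorm (Pproj - Phat) ^ 2 * L ^ 2)
        + 2 * (opNorm Efull ^ 2 * L ^ 2) := by linarith
    _ = 2 * L ^ 2 * singularValue (X + E) 1 ^ 2 * opNorm (Pproj - Phat) ^ 2
        + 2 * L ^ 2 * opNorm Efull ^ 2 := by ring


end APCR
end
end
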